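/- Let k be a field of characteristic zero not containing i (a primitive 4th root of unity). Then the diagonal matrix diag(ai, -a, a, a) ∈ GL₄(k̄), for any nonzero a ∈ k̄, is not conjugate over k̄ to any matrix in GL₄(k). -/
import Mathlib

/-- If `k` is a field of characteristic zero not containing a square root of `-1`, then
the diagonal matrix `diag(a·i, -a, a, a)` over the algebraic closure of `k` (with
`a ≠ 0` and `i² = -1`) is not conjugate over the algebraic closure to any matrix with
entries in `k`. -/
theorem stmt1 (k : Type*) [Field k] [CharZero k]
    (hk : ¬ ∃ x : k, x ^ 2 = -1)
    (i : AlgebraicClosure k) (hi : i ^ 2 = -1)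
    (a : AlgebraicClosure k) (ha : a ≠ 0) :
    ¬ ∃ (P : (Matrix (Fin 4) (Fin 4) (AlgebraicClosure k))ˣ)
        (B : Matrix (Fin 4) (Fin 4) k),
      Matrix.diagonal ![a * i, -a, a, a] =
        (P : Matrix (Fin 4) (Fin 4) (AlgebraicClosure k)) *
          (B.map (algebraMap k (AlgebraicClosure k))) *
          ((P⁻¹ : (Matrix (Fin 4) (Fin 4) (AlgebraicClosure k))ˣ) :
            Matrix (Fin 4) (Fin 4) (AlgebraicClosure k)) := by
  rintro ⟨P, B, hPB⟩
  set φ := algebraMap k (AlgebraicClosure k) with hφdef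
  have hφ : Function.Injective φ := (algebraMap k (AlgebraicClosure k)).injective
  have htr : ∀ M : Matrix (Fin 4) (Fin 4) k, (M.map φ).trace = φ M.trace := by
    intro M
    simp [Matrix.trace, Matrix.diag, map_sum]
  have h2a : (2 : AlgebraicClosure k) * a ^ 2 ≠ 0 :=
    mul_ne_zero two_ne_zero (pow_ne_zero _ ha)
  -- trace identity
  have h1 : φ B.trace = a * i + a := by
    have h := Matrix.trace_units_conj P (B.map φ)
    rw [← hPB, htr] at h
    rw [← h, Matrix.trace_diagonal, Fin.sum_univ_four]
    simp
  -- trace of square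
  have hD2 : Matrix.diagonal ![a * i, -a, a, a] * Matrix.diagonal ![a * i, -a, a, a]
      = (P : Matrix (Fin 4) (Fin 4) (AlgebraicClosure k)) * ((B * B).map φ) *
        ((P⁻¹ : (Matrix (Fin 4) (Fin 4) (AlgebraicClosure k))ˣ) :
          Matrix (Fin 4) (Fin 4) (AlgebraicClosure k)) := by
    rw [hPB, Matrix.map_mul]
    simp only [mul_assoc]
    rw [Units.inv_mul_cancel_left]
  have h2 : φ (B * B).trace = 2 * a ^ 2 := by
    have h := Matrix.trace_units_conj P ((B * B).map φ)
    rw [← hD2, htr, Matrix.diagonal_mul_diagonal] at h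
    rw [← h, Matrix.trace_diagonal, Fin.sum_univ_four]
    simp
    linear_combination a ^ 2 * hi
  have hs : (B * B).trace ≠ 0 := by
    intro h
    rw [h, map_zero] at h2
    exact h2a h2.symm
  have key : φ (B.trace ^ 2 / (B * B).trace) = i := by
    rw [map_div₀, map_pow, h1, h2, div_eq_iff h2a]
    linear_combination a ^ 2 * hi
  apply hk
  refine ⟨B.trace ^ 2 / (B * B).trace, hφ ?_⟩
  rw [map_pow, key, hi, map_neg, map_one]
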